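/- Let H be a normed space, S ⊆ H a subset (the 'residual subalgebra'), and suppose there is a constant K such that d(x, S) ≤ K·φ(x) for all x ∈ H, where φ : H → ℝ≥0. Let ψ : H × H^k → ℝ be uniformly continuous in its first argument with modulus α (i.e. |ψ(x, y) - ψ(x', y)| ≤ α(d(x, x'))) where α is continuous and nondecreasing with α(0) = 0, and suppose φ vanishes on S. Then inf_{x ∈ S} ψ(x, y) = inf_{x ∈ H} ( ψ(x, y) + α(K·φ(x)) ) for every y ∈ H^k, provided S is nonempty. -/

import Mathlib

/-!
Given `x ∈ H` and `ε > 0`, continuity of `α` at `K φ(x)` yields `t > K φ(x) ≥ d(x, S)` with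
`α t < α (K φ(x)) + ε`; a point `s ∈ S` with `d(x, s) < t` then satisfies
`ψ(s, y) ≤ ψ(x, y) + α(d(x, s)) ≤ ψ(x, y) + α(K φ(x)) + ε` by monotonicity of `α`. Conversely
the penalty vanishes on `S`. Hence both families have the same lower bounds, which forces
equal infima in `ℝ` even when they are unbounded (both infima are then the junk value `0`).
-/

open Set Metric Topology

theorem Real.iInf_eq_iInf_of_forall_exists_le_add {ι κ : Sort*} {F : ι → ℝ} {G : κ → ℝ}
    (hF : ∀ i, ∃ j, G j ≤ F i) (hG : ∀ j, ∀ ε > 0, ∃ i, F i ≤ G j + ε) :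
    ⨅ i, F i = ⨅ j, G j := by
  have hlb : ∀ m, (∀ i, m ≤ F i) ↔ ∀ j, m ≤ G j := fun m =>
    ⟨fun hm j => le_of_forall_pos_le_add fun ε hε =>
      let ⟨i, hi⟩ := hG j ε hε; (hm i).trans hi,
     fun hm i => let ⟨j, hj⟩ := hF i; (hm j).trans hj⟩
  rcases isEmpty_or_nonempty ι with hι | hι
  · have : IsEmpty κ := ⟨fun j => let ⟨i, _⟩ := hG j 1 one_pos; hι.elim i⟩
    simp only [Real.iInf_of_isEmpty]
  have : Nonempty κ := let ⟨i⟩ := hι; let ⟨j, _⟩ := hF i; ⟨j⟩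
  have hbdd : BddBelow (range F) ↔ BddBelow (range G) := by
    simp only [bddBelow_def, forall_mem_range, hlb]
  by_cases hb : BddBelow (range F)
  · exact le_antisymm (le_ciInf <| (hlb _).1 (ciInf_le hb))
      (le_ciInf <| (hlb _).2 (ciInf_le (hbdd.1 hb)))
  · rw [Real.iInf_of_not_bddBelow hb, Real.iInf_of_not_bddBelow (hbdd.not.1 hb)]

theorem Metric.exists_mem_apply_dist_lt_of_infDist_le {H : Type*} [PseudoMetricSpace H]
    {S : Set H} (hS : S.Nonempty) {x : H} {r : ℝ} (hr : infDist x S ≤ r) {α : ℝ → ℝ}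
    (hαc : ContinuousAt α r) (hαm : Monotone α) {ε : ℝ} (hε : 0 < ε) :
    ∃ s ∈ S, α (dist x s) < α r + ε := by
  obtain ⟨t, hαt, hrt⟩ : ∃ t, α t < α r + ε ∧ r < t :=
    ((hαc.eventually (gt_mem_nhds (lt_add_of_pos_right _ hε))).filter_mono
      nhdsWithin_le_nhds |>.and self_mem_nhdsWithin).exists (f := 𝓝[>] r)
  obtain ⟨s, hs, hst⟩ := (infDist_lt_iff hS).1 (hr.trans_lt hrt)
  exact ⟨s, hs, (hαm hst.le).trans_lt hαt⟩

theorem stmt8_general {H : Type*} [MetricSpace H] {k : ℕ}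
    (S : Set H) (hS : S.Nonempty) (K : ℝ) (φ : H → ℝ)
    (hφS : ∀ x ∈ S, φ x = 0)
    (hd : ∀ x, Metric.infDist x S ≤ K * φ x)
    (α : ℝ → ℝ) (hαc : Continuous α) (hαm : Monotone α) (hα0 : α 0 = 0)
    (ψ : H → (Fin k → H) → ℝ)
    (hmod : ∀ x x' y, |ψ x y - ψ x' y| ≤ α (dist x x'))
    (y : Fin k → H) :
    (⨅ x : S, ψ x y) = ⨅ x : H, (ψ x y + α (K * φ x)) := by
  refine Real.iInf_eq_iInf_of_forall_exists_le_add
    (fun s => ⟨s, by simp [hφS s s.2, hα0]⟩) fun x ε hε => ?_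
  obtain ⟨s, hs, hαs⟩ :=
    exists_mem_apply_dist_lt_of_infDist_le hS (hd x) hαc.continuousAt hαm hε
  have hψ := (abs_le.1 (hmod s x y)).2
  rw [dist_comm] at hψ
  exact ⟨⟨s, hs⟩, by linarith⟩

/-- Quantification Lemma, infimum form: if `S ⊆ H` is nonempty with
`d(x, S) ≤ K φ(x)`, `φ` vanishes on `S`, and `ψ` is uniformly continuous in its
first argument with modulus `α` (continuous, nondecreasing, `α 0 = 0`), then
`inf_{x ∈ S} ψ(x, y) = inf_{x ∈ H} (ψ(x, y) + α (K φ(x)))`. -/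
theorem stmt8 {H : Type*} [MetricSpace H] {k : ℕ}
    (S : Set H) (hS : S.Nonempty) (K : ℝ) (φ : H → ℝ)
    (hφ0 : ∀ x, 0 ≤ φ x) (hφS : ∀ x ∈ S, φ x = 0)
    (hd : ∀ x, Metric.infDist x S ≤ K * φ x)
    (α : ℝ → ℝ) (hαc : Continuous α) (hαm : Monotone α) (hα0 : α 0 = 0)
    (ψ : H → (Fin k → H) → ℝ)
    (hmod : ∀ x x' y, |ψ x y - ψ x' y| ≤ α (dist x x'))
    (y : Fin k → H) :
    (⨅ x : S, ψ x y) = ⨅ x : H, (ψ x y + α (K * φ x)) :=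
  stmt8_general S hS K φ hφS hd α hαc hαm hα0 ψ hmod y
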